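/- arXiv:2601.14317 — 10 statements merged into one kernel-verified Lean document; each statement's English description precedes it below -/
import Mathlib

section
/- Let E be a finite-dimensional real normed space and K ⊆ E a nonempty bounded set with diam K > 0. Then the ball hull of K equals the intersection of all completions of K: bh(K) = ⋂ {K^c : K^c is a completion of K}. -/
open Metric Set

variable {E : Type*} [NormedAddCommGroup E] [NormedSpace ℝ E] [FiniteDimensional ℝ E]

/-- The Chebyshev radius of a set: the smallest `r` such that `K` is contained
in a closed ball of radius `r`. -/
noncomputable def chebRadius (K : Set E) : ℝ :=
  sInf {r : ℝ | ∃ x : E, K ⊆ Metric.closedBall x r}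

/-- The `r`-ball intersection of `K`. -/
def ballInt (K : Set E) (r : ℝ) : Set E :=
  ⋂ x ∈ K, Metric.closedBall x r

/-- The `r`-ball hull of `K`. -/
def ballHull (K : Set E) (r : ℝ) : Set E :=
  ⋂ x ∈ {x : E | K ⊆ Metric.closedBall x r}, Metric.closedBall x r

/-- The Chebyshev set of `K`: centers of minimal enclosing balls of `K`. -/
noncomputable def chebSet (K : Set E) : Set E :=
  {x : E | K ⊆ Metric.closedBall x (chebRadius K)}

/-- A bounded set is (diametrically) complete if adding any new point
increases its diameter. -/
def IsDiamComplete (C : Set E) : Prop :=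
  Bornology.IsBounded C ∧ ∀ x ∉ C, Metric.diam C < Metric.diam (C ∪ {x})

/-- `Kc` is a completion of `K`: a complete set containing `K` with the same diameter. -/
def IsCompletion (Kc K : Set E) : Prop :=
  IsDiamComplete Kc ∧ K ⊆ Kc ∧ Metric.diam Kc = Metric.diam K

/-- The critical set of `K` with respect to a Chebyshev center `x`. -/
noncomputable def critSet (K : Set E) (x : E) : Set E :=
  K ∩ Metric.sphere x (chebRadius K)

lemma exists_completion_superset (K A : Set E) (hK : K.Nonempty)
    (hb : Bornology.IsBounded K) (hKA : K ⊆ A)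
    (hA : ∀ u ∈ A, ∀ v ∈ A, dist u v ≤ Metric.diam K) :
    ∃ M, IsCompletion M K ∧ A ⊆ M := by
  obtain ⟨k, hk⟩ := hK
  set d := Metric.diam K with hdd
  set S : Set (Set E) := {B | A ⊆ B ∧ ∀ u ∈ B, ∀ v ∈ B, dist u v ≤ d} with hS
  have hbdd : ∀ B ∈ S, Bornology.IsBounded B := by
    intro B hB
    refine Metric.isBounded_closedBall (x := k) (r := d) |>.subset ?_
    intro v hv
    exact Metric.mem_closedBall.2 (hB.2 v hv k (hB.1 (hKA hk)))
  have hzorn : ∀ c ⊆ S, IsChain (· ⊆ ·) c → c.Nonempty →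
      ∃ ub ∈ S, ∀ s ∈ c, s ⊆ ub := by
    intro c hcS hchain hcne
    refine ⟨⋃₀ c, ⟨?_, ?_⟩, fun s hs => subset_sUnion_of_mem hs⟩
    · obtain ⟨B, hB⟩ := hcne
      exact ((hcS hB).1).trans (subset_sUnion_of_mem hB)
    · rintro u hu v hv
      obtain ⟨B, hB, huB⟩ := hu
      obtain ⟨C, hC, hvC⟩ := hv
      rcases hchain.total hB hC with h | h
      · exact (hcS hC).2 u (h huB) v hvC
      · exact (hcS hB).2 u huB v (h hvC)
  obtain ⟨M, hAM, hM⟩ := zorn_subset_nonempty S hzorn A ⟨subset_rfl, hA⟩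
  · have hMS := hM.prop
    have hKM : K ⊆ M := hKA.trans hAM
    have hMb : Bornology.IsBounded M := hbdd M hMS
    have hdM : Metric.diam M = d := by
      apply le_antisymm
      · exact Metric.diam_le_of_forall_dist_le Metric.diam_nonneg hMS.2
      · exact Metric.diam_mono hKM hMb
    refine ⟨M, ⟨⟨hMb, ?_⟩, hKM, hdM⟩, hAM⟩
    intro y hy
    by_contra hlt
    push_neg at hlt
    have hb' : Bornology.IsBounded (M ∪ {y}) := hMb.union (Bornology.isBounded_singleton)
    have hmem : M ∪ {y} ∈ S := by
      refine ⟨hAM.trans subset_union_left, fun u hu v hv => ?_⟩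
      calc dist u v ≤ Metric.diam (M ∪ {y}) := Metric.dist_le_diam_of_mem hb' hu hv
        _ ≤ Metric.diam M := hlt
        _ = d := hdM
    have : M ∪ {y} ⊆ M := hM.2 hmem subset_union_left
    exact hy (this (Or.inr rfl))

theorem ballHull_eq_iInter_completions (K : Set E)
    (hK : K.Nonempty) (hb : Bornology.IsBounded K) (hd : 0 < Metric.diam K) :
    ballHull K (Metric.diam K) = ⋂₀ {Kc : Set E | IsCompletion Kc K} := by
  set d := Metric.diam K with hdd
  ext p
  simp only [ballHull, mem_iInter₂, mem_setOf_eq, mem_sInter]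
  constructor
  · -- p in ball hull → p in every completion
    intro hp Kc hKc
    obtain ⟨⟨hKcb, hKccomp⟩, hKKc, hdiam⟩ := hKc
    by_contra hpKc
    have hlt := hKccomp p hpKc
    have hb' : Bornology.IsBounded (Kc ∪ {p}) := hKcb.union Bornology.isBounded_singleton
    -- get a pair at distance > diam Kc
    have : ∃ u ∈ Kc ∪ {p}, ∃ v ∈ Kc ∪ {p}, Metric.diam Kc < dist u v := by
      by_contra h
      push_neg at h
      exact absurd (Metric.diam_le_of_forall_dist_le Metric.diam_nonneg h) (not_le.2 hlt)
    obtain ⟨u, hu, v, hv, huv⟩ := this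
    have key : ∀ q ∈ Kc, d < dist p q → False := by
      intro q hq hpq
      have hKball : K ⊆ Metric.closedBall q d := by
        intro w hw
        have := Metric.dist_le_diam_of_mem hKcb (hKKc hw) hq
        rw [hdiam] at this
        exact Metric.mem_closedBall.2 this
      have := hp q hKball
      exact absurd (Metric.mem_closedBall.1 this) (not_le.2 hpq)
    rcases hu with hu | hu <;> rcases hv with hv | hv
    · exact absurd (Metric.dist_le_diam_of_mem hKcb hu hv) (not_le.2 huv)
    · rw [mem_singleton_iff] at hv; subst hv
      exact key u hu (by rwa [hdiam, dist_comm] at huv)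
    · rw [mem_singleton_iff] at hu; subst hu
      exact key v hv (by rwa [hdiam] at huv)
    · rw [mem_singleton_iff] at hu hv; subst hu; subst hv
      simp at huv
      exact absurd huv (not_lt.2 Metric.diam_nonneg)
  · -- p in every completion → p in every enclosing ball
    intro hp x hx
    have hA : ∀ u ∈ K ∪ {x}, ∀ v ∈ K ∪ {x}, dist u v ≤ d := by
      rintro u (hu | hu) v (hv | hv)
      · exact Metric.dist_le_diam_of_mem hb hu hv
      · rw [mem_singleton_iff] at hv; subst hv
        exact Metric.mem_closedBall.1 (hx hu)
      · rw [mem_singleton_iff] at hu; subst hu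
        rw [dist_comm]; exact Metric.mem_closedBall.1 (hx hv)
      · rw [mem_singleton_iff] at hu hv; subst hu; subst hv
        simp [hd.le]
    obtain ⟨M, hM, hAM⟩ := exists_completion_superset K (K ∪ {x}) hK hb subset_union_left hA
    have hpM : p ∈ M := hp M hM
    have hxM : x ∈ M := hAM (Or.inr rfl)
    have : dist p x ≤ Metric.diam M := Metric.dist_le_diam_of_mem hM.1.1 hpM hxM
    rw [hM.2.2] at this
    exact Metric.mem_closedBall.2 this
end

section
/- Let E be a finite-dimensional real normed space and K ⊆ E a nonempty bounded set with diam K > 0. Then the ball intersection of K equals the union of all completions of K: bi(K) = ⋃ {K^c : K^c is a completion of K}. -/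
open Metric Set

variable {E : Type*} [NormedAddCommGroup E] [NormedSpace ℝ E] [FiniteDimensional ℝ E]

/-! Every point of `bi(K)` can be added to `K` without increasing the diameter, and every set
extends, by Zorn's lemma, to a maximal superset of the same diameter; such a maximal set is
complete. Conversely a completion of `K` has diameter `diam K` and contains `K`, so it lies
in `bi(K)`. -/

section PseudoMetric

variable {X : Type*}

theorem IsChain.ediam_sUnion_le [PseudoEMetricSpace X] {c : Set (Set X)}
    (hc : IsChain (· ⊆ ·) c) {d : ENNReal} (hd : ∀ s ∈ c, ediam s ≤ d) :
    ediam (⋃₀ c) ≤ d := by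
  refine ediam_le ?_
  rintro x ⟨s, hs, hxs⟩ y ⟨t, ht, hyt⟩
  rcases hc.total hs ht with hst | hts
  · exact edist_le_of_ediam_le (hst hxs) hyt (hd t ht)
  · exact edist_le_of_ediam_le hxs (hts hyt) (hd s hs)

theorem exists_maximal_superset_ediam_le [PseudoEMetricSpace X] (A : Set X) :
    ∃ M, A ⊆ M ∧ Maximal (fun N => ediam N ≤ ediam A) M :=
  zorn_subset_nonempty {N | ediam N ≤ ediam A}
    (fun c hcS hc _ => ⟨⋃₀ c, hc.ediam_sUnion_le hcS, fun _ => subset_sUnion_of_mem⟩)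
    A (le_refl (ediam A))

theorem diam_insert_eq_of_forall_dist_le [PseudoMetricSpace X] {K : Set X} {x : X}
    (hb : Bornology.IsBounded K) (hx : ∀ y ∈ K, dist x y ≤ diam K) :
    diam (insert x K) = diam K := by
  refine le_antisymm (diam_le_of_forall_dist_le diam_nonneg ?_)
    (diam_mono (subset_insert x K) (hb.insert x))
  rintro a (rfl | ha) b (rfl | hbK)
  · simp [diam_nonneg]
  · exact hx b hbK
  · exact dist_comm a b ▸ hx a ha
  · exact dist_le_diam_of_mem hb ha hbK

end PseudoMetric

section NormedGroup

variable {V : Type*} [NormedAddCommGroup V]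

theorem mem_ballInt {K : Set V} {r : ℝ} {x : V} :
    x ∈ ballInt K r ↔ ∀ y ∈ K, dist x y ≤ r := by
  simp only [ballInt, mem_iInter, mem_closedBall]

theorem isDiamComplete_of_maximal {M : Set V} {d : ENNReal} (hd : d ≠ ⊤)
    (hM : Maximal (fun N => ediam N ≤ d) M) : IsDiamComplete M := by
  have hMb : Bornology.IsBounded M :=
    isBounded_iff_ediam_ne_top.mpr (ne_top_of_le_ne_top hd hM.prop)
  refine ⟨hMb, fun z hz => lt_of_not_ge fun hle => hz ?_⟩
  have hMzb : Bornology.IsBounded (M ∪ {z}) := hMb.union Bornology.isBounded_singleton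
  have hediam : ediam (M ∪ {z}) ≤ ediam M :=
    (ENNReal.toReal_le_toReal hMzb.ediam_ne_top hMb.ediam_ne_top).mp hle
  exact hM.mem_of_prop_insert (by simpa only [union_singleton] using hediam.trans hM.prop)

theorem exists_isCompletion {K : Set V} (hb : Bornology.IsBounded K) :
    ∃ Kc, IsCompletion Kc K := by
  obtain ⟨M, hKM, hM⟩ := exists_maximal_superset_ediam_le K
  have hediam : ediam M = ediam K := le_antisymm hM.prop (ediam_mono hKM)
  exact ⟨M, isDiamComplete_of_maximal hb.ediam_ne_top hM, hKM, congrArg ENNReal.toReal hediam⟩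

theorem IsCompletion.subset_ballInt {Kc K : Set V} (h : IsCompletion Kc K) :
    Kc ⊆ ballInt K (diam K) := by
  obtain ⟨⟨hbKc, -⟩, hKKc, hdiam⟩ := h
  exact fun x hx => mem_ballInt.2 fun y hy => hdiam ▸ dist_le_diam_of_mem hbKc hx (hKKc hy)

end NormedGroup

theorem ballInt_eq_sUnion_completions_general (K : Set E)
    (hb : Bornology.IsBounded K) :
    ballInt K (Metric.diam K) = ⋃₀ {Kc : Set E | IsCompletion Kc K} := by
  refine subset_antisymm (fun x hx => ?_) (sUnion_subset fun Kc hKc => hKc.subset_ballInt)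
  obtain ⟨Kc, hKc, hxKKc, hdiam⟩ := exists_isCompletion (hb.insert x)
  refine ⟨Kc, ⟨hKc, (subset_insert x K).trans hxKKc, ?_⟩, hxKKc (mem_insert x K)⟩
  rw [hdiam, diam_insert_eq_of_forall_dist_le hb (mem_ballInt.1 hx)]

theorem ballInt_eq_sUnion_completions (K : Set E)
    (hK : K.Nonempty) (hb : Bornology.IsBounded K) (hd : 0 < Metric.diam K) :
    ballInt K (Metric.diam K) = ⋃₀ {Kc : Set E | IsCompletion Kc K} :=
  ballInt_eq_sUnion_completions_general K hb
end

section
/- Let E be a finite-dimensional real normed space, K ⊆ E a nonempty bounded set with diam K > 0, and let B(x, λ_K) be a minimal enclosing ball of K (i.e., x ∈ Ch(K)). Then there exists a completion K^c of K with x ∈ K^c. -/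
open Metric Set

variable {E : Type*} [NormedAddCommGroup E] [NormedSpace ℝ E] [FiniteDimensional ℝ E]

lemma exists_completion_aux (K : Set E) (hK : K.Nonempty)
    (hb : Bornology.IsBounded K) :
    ∃ C : Set E, IsDiamComplete C ∧ K ⊆ C ∧ Metric.diam C = Metric.diam K := by
  obtain ⟨p, hp⟩ := hK
  set S : Set (Set E) :=
    {C | K ⊆ C ∧ Bornology.IsBounded C ∧ Metric.diam C = Metric.diam K} with hS
  have hchain : ∀ c ⊆ S, IsChain (· ⊆ ·) c → c.Nonempty →
      ∃ ub ∈ S, ∀ s ∈ c, s ⊆ ub := by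
    intro c hcS hchain ⟨C₀, hC₀⟩
    refine ⟨⋃₀ c, ⟨?_, ?_, ?_⟩, fun s hs => subset_sUnion_of_mem hs⟩
    · exact (hcS hC₀).1.trans (subset_sUnion_of_mem hC₀)
    · apply Bornology.IsBounded.subset (Metric.isBounded_closedBall (x := p) (r := Metric.diam K))
      rintro y ⟨C, hC, hyC⟩
      have hCS := hcS hC
      have : dist y p ≤ Metric.diam C := Metric.dist_le_diam_of_mem hCS.2.1 hyC (hCS.1 hp)
      simpa [Metric.mem_closedBall, hCS.2.2] using this
    · apply le_antisymm
      · apply Metric.diam_le_of_forall_dist_le Metric.diam_nonneg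
        rintro a ⟨Ca, hCa, ha⟩ b ⟨Cb, hCb, hb'⟩
        rcases hchain.total hCa hCb with h | h
        · have := Metric.dist_le_diam_of_mem (hcS hCb).2.1 (h ha) hb'
          rwa [(hcS hCb).2.2] at this
        · have := Metric.dist_le_diam_of_mem (hcS hCa).2.1 ha (h hb')
          rwa [(hcS hCa).2.2] at this
      · apply Metric.diam_mono ((hcS hC₀).1.trans (subset_sUnion_of_mem hC₀))
        apply Bornology.IsBounded.subset (Metric.isBounded_closedBall (x := p) (r := Metric.diam K))
        rintro y ⟨C, hC, hyC⟩
        have hCS := hcS hC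
        have : dist y p ≤ Metric.diam C := Metric.dist_le_diam_of_mem hCS.2.1 hyC (hCS.1 hp)
        simpa [Metric.mem_closedBall, hCS.2.2] using this
  obtain ⟨C, hKC, hCS, hmax⟩ := zorn_subset_nonempty S hchain K ⟨subset_rfl, hb, rfl⟩
  refine ⟨C, ⟨hCS.2.1, ?_⟩, hCS.1, hCS.2.2⟩
  intro y hy
  by_contra hle
  push_neg at hle
  have hbY : Bornology.IsBounded (C ∪ {y}) := hCS.2.1.union Bornology.isBounded_singleton
  have hge : Metric.diam C ≤ Metric.diam (C ∪ {y}) :=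
    Metric.diam_mono subset_union_left hbY
  have hdiam : Metric.diam (C ∪ {y}) = Metric.diam K := by
    rw [le_antisymm hle hge, hCS.2.2]
  have : C ∪ {y} = C := subset_antisymm (hmax ⟨hCS.1.trans subset_union_left, hbY, hdiam⟩ subset_union_left) subset_union_left
  exact hy (this ▸ (mem_union_right C rfl : y ∈ C ∪ {y}))

theorem exists_completion_containing_chebyshev_center (K : Set E)
    (hK : K.Nonempty) (hb : Bornology.IsBounded K) (hd : 0 < Metric.diam K)
    (x : E) (hx : x ∈ chebSet K) :
    ∃ Kc : Set E, IsCompletion Kc K ∧ x ∈ Kc := by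
  obtain ⟨p, hp⟩ := hK
  have hcheb : chebRadius K ≤ Metric.diam K := by
    apply csInf_le
    · refine ⟨0, ?_⟩
      rintro r ⟨z, hz⟩
      exact le_trans dist_nonneg (hz hp)
    · exact ⟨p, fun a ha => Metric.dist_le_diam_of_mem hb ha hp⟩
  have hxd : ∀ a ∈ K, dist a x ≤ Metric.diam K :=
    fun a ha => le_trans (hx ha) hcheb
  set K' : Set E := K ∪ {x} with hK'
  have hbK' : Bornology.IsBounded K' := hb.union Bornology.isBounded_singleton
  have hdK' : Metric.diam K' = Metric.diam K := by
    apply le_antisymm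
    · apply Metric.diam_le_of_forall_dist_le hd.le
      rintro a (ha | ha) b (hb' | hb')
      · exact Metric.dist_le_diam_of_mem hb ha hb'
      · rw [mem_singleton_iff] at hb'; subst hb'; exact hxd a ha
      · rw [mem_singleton_iff] at ha; subst ha
        rw [dist_comm]; exact hxd b hb'
      · rw [mem_singleton_iff] at ha hb'; subst ha; subst hb'; simpa using hd.le
    · exact Metric.diam_mono subset_union_left hbK'
  obtain ⟨C, hC, hK'C, hdC⟩ :=
    exists_completion_aux K' ⟨p, mem_union_left _ hp⟩ hbK'
  exact ⟨C, ⟨hC, subset_union_left.trans hK'C, by rw [hdC, hdK']⟩,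
    hK'C (mem_union_right _ rfl)⟩
end

section
/- Let E be a finite-dimensional real normed space, K ⊆ E a nonempty bounded set with diam K > 0, and let B(x, λ_K) be a minimal enclosing ball of K (i.e., x ∈ Ch(K)). Then B(x, λ_K) contains some completion K^c of K. -/
open Metric Set

variable {E : Type*} [NormedAddCommGroup E] [NormedSpace ℝ E] [FiniteDimensional ℝ E]

theorem minimal_ball_contains_some_completion (K : Set E)
    (hK : K.Nonempty) (hb : Bornology.IsBounded K) (hd : 0 < Metric.diam K)
    (x : E) (hx : x ∈ chebSet K) :
    ∃ Kc : Set E, IsCompletion Kc K ∧ Kc ⊆ Metric.closedBall x (chebRadius K) := by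
  classical
  set d := Metric.diam K with hd_def
  set lam := chebRadius K with hlam_def
  have hxK : K ⊆ Metric.closedBall x lam := hx
  obtain ⟨k₀, hk₀⟩ := hK
  have hlam0 : 0 ≤ lam := le_trans dist_nonneg (hxK hk₀)
  -- lam ≤ d
  have hlamd : lam ≤ d := by
    apply csInf_le
    · exact ⟨0, fun r hr => by
        obtain ⟨z, hz⟩ := hr
        exact le_trans dist_nonneg (hz hk₀)⟩
    · exact ⟨k₀, fun k hk => Metric.dist_le_diam_of_mem hb hk hk₀⟩
  -- d ≤ 2 * lam
  have h2lam : d ≤ 2 * lam := by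
    apply Metric.diam_le_of_forall_dist_le (by linarith)
    intro p hp q hq
    calc dist p q ≤ dist p x + dist q x := dist_triangle_right p q x
    _ ≤ lam + lam := add_le_add (hxK hp) (hxK hq)
    _ = 2 * lam := by ring
  -- Zorn's lemma on sets between K and the ball with diameter ≤ d
  set S : Set (Set E) :=
    {C | K ⊆ C ∧ C ⊆ Metric.closedBall x lam ∧ Metric.diam C ≤ d} with hS_def
  have hKS : K ∈ S := ⟨subset_rfl, hxK, le_rfl⟩
  have hzorn : ∀ c ⊆ S, IsChain (· ⊆ ·) c → c.Nonempty →
      ∃ ub ∈ S, ∀ s ∈ c, s ⊆ ub := by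
    intro c hcS hchain hcne
    refine ⟨⋃₀ c, ⟨?_, ?_, ?_⟩, fun s hs => subset_sUnion_of_mem hs⟩
    · obtain ⟨t, ht⟩ := hcne
      exact subset_trans (hcS ht).1 (subset_sUnion_of_mem ht)
    · exact sUnion_subset fun t ht => (hcS ht).2.1
    · apply Metric.diam_le_of_forall_dist_le hd.le
      intro p hp q hq
      obtain ⟨t₁, ht₁, hpt₁⟩ := hp
      obtain ⟨t₂, ht₂, hqt₂⟩ := hq
      have hbdd : ∀ t ∈ c, Bornology.IsBounded t := fun t ht =>
        (Metric.isBounded_closedBall).subset (hcS ht).2.1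
      rcases eq_or_ne t₁ t₂ with rfl | hne
      · exact le_trans (Metric.dist_le_diam_of_mem (hbdd t₁ ht₁) hpt₁ hqt₂)
          (hcS ht₁).2.2
      · rcases hchain ht₁ ht₂ hne with h | h
        · exact le_trans (Metric.dist_le_diam_of_mem (hbdd t₂ ht₂) (h hpt₁) hqt₂)
            (hcS ht₂).2.2
        · exact le_trans (Metric.dist_le_diam_of_mem (hbdd t₁ ht₁) hpt₁ (h hqt₂))
            (hcS ht₁).2.2
  obtain ⟨C, hKC, hCmax⟩ := zorn_subset_nonempty S hzorn K hKS
  obtain ⟨hKC', hCB, hCd⟩ := hCmax.1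
  have hCbdd : Bornology.IsBounded C := Metric.isBounded_closedBall.subset hCB
  have hdiamC : Metric.diam C = d := le_antisymm hCd (Metric.diam_mono hKC' hCbdd)
  refine ⟨C, ⟨⟨hCbdd, ?_⟩, hKC', hdiamC⟩, hCB⟩
  intro y hy
  by_contra hcon
  push_neg at hcon
  -- hcon : diam (C ∪ {y}) ≤ diam C = d
  have hCybdd : Bornology.IsBounded (C ∪ {y}) :=
    hCbdd.union Bornology.isBounded_singleton
  have hyd : ∀ c ∈ C, dist y c ≤ d := fun c hc => by
    have := Metric.dist_le_diam_of_mem hCybdd (mem_union_right C rfl) (mem_union_left _ hc)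
    rw [hdiamC] at hcon
    exact le_trans this hcon
  -- a helper: any point y' in the ball within distance d of all of C must lie in C
  have hmax' : ∀ y' : E, y' ∈ Metric.closedBall x lam → (∀ c ∈ C, dist y' c ≤ d) → y' ∈ C := by
    intro y' hy'B hy'd
    have hmem : C ∪ {y'} ∈ S := by
      refine ⟨subset_trans hKC' subset_union_left, union_subset hCB (by simpa using hy'B), ?_⟩
      apply Metric.diam_le_of_forall_dist_le hd.le
      intro p hp q hq
      rcases hp with hp | hp
      · rcases hq with hq | hq
        · exact le_trans (Metric.dist_le_diam_of_mem hCbdd hp hq) hCd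
        · rw [mem_singleton_iff] at hq
          rw [hq, dist_comm]
          exact hy'd p hp
      · rcases hq with hq | hq
        · rw [mem_singleton_iff] at hp
          rw [hp]
          exact hy'd q hq
        · rw [mem_singleton_iff] at hp hq
          rw [hp, hq, dist_self]
          exact hd.le
    exact hCmax.2 hmem subset_union_left (mem_union_right C rfl)
  by_cases hyB : y ∈ Metric.closedBall x lam
  · exact hy (hmax' y hyB hyd)
  · -- y outside the ball: use the antipodal trick
    have hr : lam < dist y x := by
      simpa [Metric.mem_closedBall] using hyB
    have hrpos : 0 < dist y x := lt_of_le_of_lt hlam0 hr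
    set r := dist y x with hr_def
    set t : ℝ := (d - lam) / r with ht_def
    have ht0 : 0 ≤ t := div_nonneg (by linarith) hrpos.le
    set y' : E := x - t • (y - x) with hy'_def
    have hy'x : dist y' x = d - lam := by
      rw [hy'_def, dist_eq_norm]
      simp only [sub_sub_cancel_left, norm_neg, norm_smul, Real.norm_eq_abs, abs_of_nonneg ht0]
      rw [ht_def]
      have : ‖y - x‖ = r := by rw [hr_def, dist_eq_norm]
      rw [this]
      field_simp
    have hy'B : y' ∈ Metric.closedBall x lam := by
      rw [Metric.mem_closedBall, hy'x]
      linarith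
    have hy'C : y' ∈ C := by
      apply hmax' y' hy'B
      intro c hc
      calc dist y' c ≤ dist y' x + dist x c := dist_triangle y' x c
      _ ≤ (d - lam) + lam := by
          rw [hy'x]
          have := hCB hc
          rw [Metric.mem_closedBall] at this
          rw [dist_comm]
          linarith
      _ = d := by ring
    have hyy' : dist y y' = r + (d - lam) := by
      have : y - y' = (1 + t) • (y - x) := by
        rw [hy'_def]
        rw [add_smul, one_smul]
        abel
      rw [dist_eq_norm, this, norm_smul, Real.norm_eq_abs, abs_of_nonneg (by linarith)]
      have hnorm : ‖y - x‖ = r := by rw [hr_def, dist_eq_norm]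
      rw [hnorm, ht_def]
      field_simp
    have := hyd y' hy'C
    rw [hyy'] at this
    linarith
end

section
/- Let E be a finite-dimensional real normed space and K ⊆ E a nonempty bounded set with diam K > 0. Then every minimal enclosing ball of K contains the ball hull of K: for every x ∈ Ch(K), bh(K) ⊆ B(x, λ_K). -/
open Metric Set

variable {E : Type*} [NormedAddCommGroup E] [NormedSpace ℝ E] [FiniteDimensional ℝ E]

theorem ballHull_subset_minimal_ball (K : Set E)
    (hK : K.Nonempty) (hb : Bornology.IsBounded K) (hd : 0 < Metric.diam K) :
    ∀ x ∈ chebSet K, ballHull K (Metric.diam K) ⊆ Metric.closedBall x (chebRadius K) := by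
  intro x hx y hy
  obtain ⟨k, hk⟩ := hK
  set d := Metric.diam K with hdd
  set L := chebRadius K with hL
  have hdS : d ∈ {r : ℝ | ∃ z : E, K ⊆ Metric.closedBall z r} :=
    ⟨k, fun a ha => Metric.mem_closedBall.2 (Metric.dist_le_diam_of_mem hb ha hk)⟩
  have hbdd : BddBelow {r : ℝ | ∃ z : E, K ⊆ Metric.closedBall z r} := by
    refine ⟨0, fun r hr => ?_⟩
    obtain ⟨z, hz⟩ := hr
    exact le_trans dist_nonneg (hz hk)
  have hLd : L ≤ d := csInf_le hbdd hdS
  have hL0 : 0 ≤ L := by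
    refine le_csInf ⟨d, hdS⟩ (fun r hr => ?_)
    obtain ⟨z, hz⟩ := hr
    exact le_trans dist_nonneg (hz hk)
  have hxK : K ⊆ Metric.closedBall x L := hx
  rcases eq_or_ne x y with h | h
  · simp [Metric.mem_closedBall, h.symm, hL0]
  have hdist : (0:ℝ) < dist x y := dist_pos.2 h
  set s : ℝ := (d - L) / dist x y with hs
  have hs0 : 0 ≤ s := div_nonneg (by linarith) hdist.le
  set z := x + s • (x - y) with hz
  have hsd : s * dist x y = d - L := div_mul_cancel₀ _ hdist.ne'
  have hxz : dist x z = d - L := by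
    have h2 : x - z = (-s) • (x - y) := by rw [hz]; module
    rw [dist_eq_norm, h2, norm_smul, Real.norm_eq_abs, abs_neg, abs_of_nonneg hs0,
      ← dist_eq_norm]
    exact hsd
  have hKz : K ⊆ Metric.closedBall z d := by
    intro a ha
    have h1 : dist a x ≤ L := hxK ha
    have := dist_triangle a x z
    rw [Metric.mem_closedBall]
    linarith [hxz ▸ this]
  have hyz : dist y z ≤ d := by
    have := Set.mem_iInter₂.1 hy z hKz
    exact Metric.mem_closedBall.1 this
  have hyzeq : dist y z = dist y x + (d - L) := by
    rw [dist_eq_norm, hz]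
    have : y - (x + s • (x - y)) = (1 + s) • (y - x) := by module
    rw [this, norm_smul, Real.norm_eq_abs, abs_of_nonneg (by linarith : (0:ℝ) ≤ 1 + s),
      ← dist_eq_norm]
    have : dist y x = dist x y := dist_comm y x
    nlinarith [hsd]
  rw [Metric.mem_closedBall]
  linarith
end

section
/- Let E be a finite-dimensional real normed space and K ⊆ E a nonempty bounded set with diam K > 0. Then there exists a completion K^c of K such that λ_{K^c} = λ_K and Ch(K^c) ⊆ Ch(K). -/
open Metric Set

variable {E : Type*} [NormedAddCommGroup E] [NormedSpace ℝ E] [FiniteDimensional ℝ E]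

lemma chebRadius_setNonempty (K : Set E) (hb : Bornology.IsBounded K) :
    {r : ℝ | ∃ x : E, K ⊆ Metric.closedBall x r}.Nonempty := by
  rcases K.eq_empty_or_nonempty with h | h
  · exact ⟨0, 0, by simp [h]⟩
  · obtain ⟨k₀, hk₀⟩ := h
    exact ⟨Metric.diam K, k₀, fun x hx =>
      Metric.mem_closedBall.2 (Metric.dist_le_diam_of_mem hb hx hk₀)⟩

lemma chebRadius_bddBelow (K : Set E) (hK : K.Nonempty) :
    BddBelow {r : ℝ | ∃ x : E, K ⊆ Metric.closedBall x r} := by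
  obtain ⟨k₀, hk₀⟩ := hK
  exact ⟨0, fun r ⟨x, hx⟩ => dist_nonneg.trans (hx hk₀)⟩

/-- In a finite-dimensional space a Chebyshev center exists. -/
lemma exists_cheb_center (K : Set E) (hK : K.Nonempty) (hb : Bornology.IsBounded K) :
    ∃ c : E, K ⊆ Metric.closedBall c (chebRadius K) := by
  obtain ⟨k₀, hk₀⟩ := hK
  set S := {r : ℝ | ∃ x : E, K ⊆ Metric.closedBall x r} with hS
  have hSne : S.Nonempty := chebRadius_setNonempty K hb
  have hSbdd : BddBelow S := chebRadius_bddBelow K ⟨k₀, hk₀⟩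
  set l := chebRadius K with hl
  -- choose approximate centers
  have hex : ∀ n : ℕ, ∃ x : E, K ⊆ Metric.closedBall x (l + 1 / (n + 1)) := by
    intro n
    have hpos : (0 : ℝ) < 1 / (n + 1) := by positivity
    have heq : sInf S = l := rfl
    have : sInf S < l + 1 / (n + 1) := by rw [heq]; linarith
    obtain ⟨r, hrS, hr⟩ := exists_lt_of_csInf_lt hSne this
    obtain ⟨x, hx⟩ := hrS
    exact ⟨x, hx.trans (Metric.closedBall_subset_closedBall hr.le)⟩
  choose x hx using hex
  have hxball : ∀ n, x n ∈ Metric.closedBall k₀ (l + 1) := by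
    intro n
    have h1 : dist k₀ (x n) ≤ l + 1 / (n + 1) := hx n hk₀
    have h2 : (1 : ℝ) / (n + 1) ≤ 1 := by
      rw [div_le_one (by positivity)]
      have : (0:ℝ) ≤ (n:ℝ) := Nat.cast_nonneg n
      linarith
    have := dist_comm k₀ (x n)
    simp only [Metric.mem_closedBall]
    rw [dist_comm]
    linarith
  obtain ⟨c, _, φ, hφ, hφt⟩ :=
    (isCompact_closedBall k₀ (l + 1)).tendsto_subseq hxball
  refine ⟨c, fun k hk => ?_⟩
  have h1 : Filter.Tendsto (fun n => dist k (x (φ n))) Filter.atTop (nhds (dist k c)) :=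
    Filter.Tendsto.dist tendsto_const_nhds hφt
  have h2 : Filter.Tendsto (fun n : ℕ => l + 1 / ((φ n : ℝ) + 1)) Filter.atTop (nhds (l + 0)) := by
    refine Filter.Tendsto.add tendsto_const_nhds ?_
    exact (tendsto_one_div_add_atTop_nhds_zero_nat).comp hφ.tendsto_atTop
  rw [add_zero] at h2
  exact Metric.mem_closedBall.2 (le_of_tendsto_of_tendsto' h1 h2 fun n => hx (φ n) hk)

theorem exists_completion_chebRadius_eq_and_chebSet_subset (K : Set E)
    (hK : K.Nonempty) (hb : Bornology.IsBounded K) (hd : 0 < Metric.diam K) :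
    ∃ Kc : Set E, IsCompletion Kc K ∧ chebRadius Kc = chebRadius K ∧
      chebSet Kc ⊆ chebSet K := by
  obtain ⟨k₀, hk₀⟩ := hK
  set l := chebRadius K with hl
  set d := Metric.diam K with hdd
  obtain ⟨c, hc⟩ := exists_cheb_center K ⟨k₀, hk₀⟩ hb
  have hSbdd := chebRadius_bddBelow K ⟨k₀, hk₀⟩
  have hSne := chebRadius_setNonempty K hb
  have hl0 : 0 ≤ l := le_csInf hSne fun r ⟨x, hx⟩ => dist_nonneg.trans (hx hk₀)
  have hld : l ≤ d :=
    csInf_le hSbdd ⟨k₀, fun y hy => Metric.mem_closedBall.2 (Metric.dist_le_diam_of_mem hb hy hk₀)⟩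
  have hd2l : d ≤ 2 * l := by
    calc d ≤ Metric.diam (Metric.closedBall c l) :=
          Metric.diam_mono hc Metric.isBounded_closedBall
      _ ≤ 2 * l := Metric.diam_closedBall hl0
  have hdl0 : 0 ≤ d - l := by linarith
  -- the augmented set
  set K₁ : Set E := K ∪ Metric.closedBall c (d - l) with hK₁
  have hK₁pair : ∀ p ∈ K₁, ∀ q ∈ K₁, dist p q ≤ d := by
    rintro p (hp | hp) q (hq | hq)
    · exact Metric.dist_le_diam_of_mem hb hp hq
    · calc dist p q ≤ dist p c + dist c q := dist_triangle p c q
        _ ≤ l + (d - l) := add_le_add (hc hp) (by rw [dist_comm]; exact hq)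
        _ = d := by ring
    · calc dist p q ≤ dist p c + dist c q := dist_triangle p c q
        _ ≤ (d - l) + l := add_le_add hp (by rw [dist_comm]; exact hc hq)
        _ = d := by ring
    · calc dist p q ≤ dist p c + dist c q := dist_triangle p c q
        _ ≤ (d - l) + (d - l) := add_le_add hp (by rw [dist_comm]; exact hq)
        _ ≤ d := by linarith
  -- Zorn's lemma
  set F : Set (Set E) := {C | K₁ ⊆ C ∧ ∀ p ∈ C, ∀ q ∈ C, dist p q ≤ d} with hF
  have hchain : ∀ ch ⊆ F, IsChain (fun x1 x2 => x1 ⊆ x2) ch → ch.Nonempty →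
      ∃ ub ∈ F, ∀ s ∈ ch, s ⊆ ub := by
    intro ch hchF hchain ⟨C₀, hC₀⟩
    refine ⟨⋃₀ ch, ⟨(hchF hC₀).1.trans (subset_sUnion_of_mem hC₀), ?_⟩,
      fun s hs => subset_sUnion_of_mem hs⟩
    rintro p ⟨Cp, hCp, hpCp⟩ q ⟨Cq, hCq, hqCq⟩
    rcases hchain.total hCp hCq with h | h
    · exact (hchF hCq).2 p (h hpCp) q hqCq
    · exact (hchF hCp).2 p hpCp q (h hqCq)
  obtain ⟨M, hK₁M, hMmax⟩ := zorn_subset_nonempty F hchain K₁ ⟨subset_rfl, hK₁pair⟩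
  have hMpair : ∀ p ∈ M, ∀ q ∈ M, dist p q ≤ d := hMmax.prop.2
  have hKM : K ⊆ M := (Set.subset_union_left).trans hK₁M
  have hMb : Bornology.IsBounded M := by
    refine Metric.isBounded_closedBall (x := k₀) (r := d) |>.subset fun p hp => ?_
    exact Metric.mem_closedBall.2 (hMpair p hp k₀ (hKM hk₀))
  have hdM : Metric.diam M = d :=
    le_antisymm (Metric.diam_le_of_forall_dist_le hd.le hMpair) (Metric.diam_mono hKM hMb)
  -- M is inside the ball of radius l around c
  have hMc : M ⊆ Metric.closedBall c l := by
    intro m hm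
    rcases eq_or_ne m c with rfl | hmc
    · exact Metric.mem_closedBall.2 (by simpa using hl0)
    · set v := m - c with hv
      have hv0 : ‖v‖ ≠ 0 := by
        rw [hv, norm_ne_zero_iff, sub_ne_zero]; exact hmc
      have hvpos : 0 < ‖v‖ := lt_of_le_of_ne (norm_nonneg v) (Ne.symm hv0)
      set z := c - ((d - l) / ‖v‖) • v with hz
      have hzball : z ∈ Metric.closedBall c (d - l) := by
        rw [Metric.mem_closedBall, hz, dist_eq_norm]
        have hcc : c - ((d - l) / ‖v‖) • v - c = -(((d - l) / ‖v‖) • v) := by abel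
        rw [hcc, norm_neg, norm_smul, Real.norm_eq_abs, abs_div,
          abs_of_nonneg hdl0, abs_of_pos hvpos, div_mul_cancel₀ _ hv0]
      have hzM : z ∈ M := hK₁M (Or.inr hzball)
      have hdist : dist m z = ‖v‖ + (d - l) := by
        rw [dist_eq_norm, hz]
        have : m - (c - ((d - l) / ‖v‖) • v) = (1 + (d - l) / ‖v‖) • v := by
          rw [add_smul, one_smul, hv]; abel
        rw [this, norm_smul, Real.norm_eq_abs,
          abs_of_nonneg (by positivity)]
        field_simp
      have := hMpair m hm z hzM
      rw [hdist] at this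
      have : ‖v‖ ≤ l := by linarith
      simpa [Metric.mem_closedBall, dist_eq_norm, hv] using this
  -- chebRadius M = l
  have hchebM : chebRadius M = l := by
    refine le_antisymm (csInf_le (chebRadius_bddBelow M ⟨k₀, hKM hk₀⟩) ⟨c, hMc⟩) ?_
    refine le_csInf ⟨l, c, hMc⟩ ?_
    rintro r ⟨x, hx⟩
    exact csInf_le hSbdd ⟨x, hKM.trans hx⟩
  -- completeness
  refine ⟨M, ⟨⟨hMb, ?_⟩, hKM, hdM⟩, hchebM, ?_⟩
  · intro x hx
    have hnot : ¬ (M ∪ {x} ∈ F) := by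
      intro hmem
      have := hMmax.2 hmem (Set.subset_union_left)
      exact hx (this (Or.inr rfl))
    have : ¬ ∀ p ∈ M ∪ {x}, ∀ q ∈ M ∪ {x}, dist p q ≤ d := by
      intro h
      exact hnot ⟨hK₁M.trans Set.subset_union_left, h⟩
    push_neg at this
    obtain ⟨p, hp, q, hq, hpq⟩ := this
    have hbx : Bornology.IsBounded (M ∪ {x}) := hMb.union Bornology.isBounded_singleton
    calc Metric.diam M = d := hdM
      _ < dist p q := hpq
      _ ≤ Metric.diam (M ∪ {x}) := Metric.dist_le_diam_of_mem hbx hp hq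
  · intro x hxM
    have : M ⊆ Metric.closedBall x (chebRadius M) := hxM
    rw [hchebM] at this
    exact fun k hk => this (hKM hk)
end

section
/- Let E be a finite-dimensional real normed space and K ⊆ E a nonempty bounded set with diam K > 0. Then for every x ∈ Ch(K) there exists a completion K^c of K with x ∈ Ch(K^c). -/
open Metric Set

variable {E : Type*} [NormedAddCommGroup E] [NormedSpace ℝ E] [FiniteDimensional ℝ E]

theorem exists_completion_with_chebyshev_center (K : Set E)
    (hK : K.Nonempty) (hb : Bornology.IsBounded K) (hd : 0 < Metric.diam K) :
    ∀ x ∈ chebSet K, ∃ Kc : Set E, IsCompletion Kc K ∧ x ∈ chebSet Kc := by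
  intro x hx
  obtain ⟨k0, hk0⟩ := hK
  set d := Metric.diam K with hdd
  set lK := chebRadius K with hl
  set RK := {r : ℝ | ∃ c : E, K ⊆ Metric.closedBall c r} with hRK
  have hdmem : d ∈ RK := ⟨k0, fun y hy => by
    simpa [Metric.mem_closedBall] using Metric.dist_le_diam_of_mem hb hy hk0⟩
  have hRK_lb : ∀ r ∈ RK, d / 2 ≤ r := by
    intro r hr
    obtain ⟨c, hc⟩ := hr
    have hr0 : 0 ≤ r := le_trans dist_nonneg (hc hk0)
    have : d ≤ 2 * r := by
      calc d ≤ Metric.diam (Metric.closedBall c r) :=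
              Metric.diam_mono hc Metric.isBounded_closedBall
        _ ≤ 2 * r := Metric.diam_closedBall hr0
    linarith
  have hbdd : BddBelow RK := ⟨d / 2, hRK_lb⟩
  have hld2 : d / 2 ≤ lK := le_csInf ⟨d, hdmem⟩ hRK_lb
  have hld : lK ≤ d := csInf_le hbdd hdmem
  have hl0 : 0 ≤ lK := le_trans (by linarith) hld2
  have hxK : K ⊆ Metric.closedBall x lK := hx
  -- the augmented set
  set K1 := K ∪ Metric.closedBall x (d - lK) with hK1
  have hK1d : ∀ p ∈ K1, ∀ q ∈ K1, dist p q ≤ d := by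
    have hKb : ∀ p ∈ K, ∀ q ∈ Metric.closedBall x (d - lK), dist p q ≤ d := by
      intro p hp q hq
      calc dist p q ≤ dist p x + dist x q := dist_triangle p x q
        _ ≤ lK + (d - lK) := add_le_add (hxK hp) (by simpa [dist_comm] using hq)
        _ = d := by ring
    rintro p (hp | hp) q (hq | hq)
    · exact Metric.dist_le_diam_of_mem hb hp hq
    · exact hKb p hp q hq
    · rw [dist_comm]; exact hKb q hq p hp
    · calc dist p q ≤ dist p x + dist x q := dist_triangle p x q
        _ ≤ (d - lK) + (d - lK) := add_le_add hp (by simpa [dist_comm] using hq)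
        _ ≤ d := by linarith
  -- Zorn's lemma to get a maximal set of diameter ≤ d containing K1
  set S : Set (Set E) := {C | K1 ⊆ C ∧ ∀ p ∈ C, ∀ q ∈ C, dist p q ≤ d} with hS
  have hK1S : K1 ∈ S := ⟨subset_rfl, hK1d⟩
  obtain ⟨M, hK1M, hMS, hMmax⟩ :
      ∃ M, K1 ⊆ M ∧ M ∈ S ∧ ∀ C ∈ S, M ⊆ C → C = M := by
    have hch : ∀ c ⊆ S, IsChain (· ⊆ ·) c → c.Nonempty → ∃ ub ∈ S, ∀ s ∈ c, s ⊆ ub := by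
      intro c hcS hchain hcne
      obtain ⟨s0, hs0⟩ := hcne
      refine ⟨⋃₀ c, ⟨(hcS hs0).1.trans (subset_sUnion_of_mem hs0), ?_⟩,
        fun s hs => subset_sUnion_of_mem hs⟩
      rintro p ⟨s, hs, hps⟩ q ⟨t, ht, hqt⟩
      rcases hchain.total hs ht with h | h
      · exact (hcS ht).2 p (h hps) q hqt
      · exact (hcS hs).2 p hps q (h hqt)
    obtain ⟨M, hM1, hM2⟩ := zorn_subset_nonempty S hch K1 hK1S
    exact ⟨M, hM1, hM2.prop, fun C hC hMC => le_antisymm (hM2.le_of_ge hC hMC) hMC⟩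
  have hKM : K ⊆ M := (subset_union_left.trans hK1M)
  have hballM : Metric.closedBall x (d - lK) ⊆ M := (subset_union_right.trans hK1M)
  have hMb : Bornology.IsBounded M := by
    have : M ⊆ Metric.closedBall k0 d :=
      fun p hp => Metric.mem_closedBall.mpr (hMS.2 p hp k0 (hKM hk0))
    exact Metric.isBounded_closedBall.subset this
  have hMdiam : Metric.diam M = d := by
    refine le_antisymm (Metric.diam_le_of_forall_dist_le (le_of_lt hd) hMS.2) ?_
    exact Metric.diam_mono hKM hMb
  -- M is diametrically complete
  have hcomp : IsDiamComplete M := by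
    refine ⟨hMb, fun y hy => ?_⟩
    by_contra hcon
    push_neg at hcon
    have hMyb : Bornology.IsBounded (M ∪ {y}) := hMb.union (Bornology.isBounded_singleton)
    have hMy : M ∪ {y} ∈ S := by
      refine ⟨hK1M.trans subset_union_left, fun p hp q hq => ?_⟩
      calc dist p q ≤ Metric.diam (M ∪ {y}) := Metric.dist_le_diam_of_mem hMyb hp hq
        _ ≤ Metric.diam M := hcon
        _ = d := hMdiam
    have := hMmax _ hMy subset_union_left
    exact hy (this ▸ (mem_union_right M rfl : y ∈ M ∪ {y}))
  -- M is contained in the ball of radius lK around x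
  have hMball : M ⊆ Metric.closedBall x lK := by
    intro y hy
    rw [Metric.mem_closedBall, dist_eq_norm]
    set t := ‖y - x‖ with ht
    rcases eq_or_lt_of_le (norm_nonneg (y - x)) with h0 | h0
    · exact le_of_eq_of_le (ht.trans h0.symm) hl0
    · set c := (d - lK) / t with hc
      have hc0 : 0 ≤ c := div_nonneg (by linarith) (le_of_lt h0)
      set z := x - c • (y - x) with hz
      have hzball : z ∈ Metric.closedBall x (d - lK) := by
        rw [Metric.mem_closedBall, dist_eq_norm]
        have : z - x = -(c • (y - x)) := by rw [hz]; abel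
        rw [this, norm_neg, norm_smul, Real.norm_eq_abs, abs_of_nonneg hc0, hc]
        rw [div_mul_cancel₀ _ (ne_of_gt h0)]
      have hyz : y - z = (1 + c) • (y - x) := by
        rw [hz, add_smul, one_smul]; abel
      have hdistyz : dist y z = t + (d - lK) := by
        rw [dist_eq_norm, hyz, norm_smul, Real.norm_eq_abs,
          abs_of_nonneg (by linarith : (0:ℝ) ≤ 1 + c), add_mul, one_mul, hc,
          div_mul_cancel₀ _ (ne_of_gt h0)]
      have hle : dist y z ≤ d := hMS.2 y hy z (hballM hzball)
      rw [hdistyz] at hle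
      linarith
  -- conclude
  refine ⟨M, ⟨hcomp, hKM, hMdiam⟩, ?_⟩
  have hlM : lK ≤ chebRadius M := by
    refine le_csInf ⟨d, x, fun p hp => ?_⟩ ?_
    · exact Metric.mem_closedBall.mpr (le_trans (Metric.mem_closedBall.mp (hMball hp)) hld)
    · intro r hr
      obtain ⟨c, hc⟩ := hr
      exact csInf_le hbdd ⟨c, hKM.trans hc⟩
  exact hMball.trans (Metric.closedBall_subset_closedBall hlM)
end

section
/- Let E be a finite-dimensional real normed space and K ⊆ E a nonempty bounded set with diam K > 0 that possesses a unique completion K^c (i.e., K^c is a completion of K and every completion of K equals K^c). Then λ_K = λ_{K^c} and Ch(K) = Ch(K^c). -/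
open Metric Set

variable {E : Type*} [NormedAddCommGroup E] [NormedSpace ℝ E] [FiniteDimensional ℝ E]

theorem chebSet_eq_of_unique_completion (K Kc : Set E)
    (hK : K.Nonempty) (hb : Bornology.IsBounded K) (hd : 0 < Metric.diam K)
    (hKc : IsCompletion Kc K) (huniq : ∀ C : Set E, IsCompletion C K → C = Kc) :
    chebRadius K = chebRadius Kc ∧ chebSet K = chebSet Kc := by
  obtain ⟨⟨hcb, _⟩, hsub, hdiam⟩ := hKc
  obtain ⟨y0, hy0⟩ := hK
  set d := Metric.diam K with hdd
  have hd0 : 0 ≤ d := Metric.diam_nonneg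
  -- Step 1: Kc is exactly the set of points within distance d of all of K.
  have hKcEq : ∀ z : E, z ∈ Kc ↔ ∀ y ∈ K, dist z y ≤ d := by
    intro z
    constructor
    · intro hz y hy
      calc dist z y ≤ Metric.diam Kc := Metric.dist_le_diam_of_mem hcb hz (hsub hy)
        _ = d := hdiam
    · intro hz
      set F : Set (Set E) := {S | insert z K ⊆ S ∧ ∀ a ∈ S, ∀ b ∈ S, dist a b ≤ d} with hF
      have hKzF : insert z K ∈ F := by
        constructor
        · exact subset_rfl
        · rintro a (rfl | ha) b (rfl | hb')
          · simpa using hd0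
          · exact hz b hb'
          · rw [dist_comm]; exact hz a ha
          · exact Metric.dist_le_diam_of_mem hb ha hb'
      have hchainub : ∀ c ⊆ F, IsChain (· ⊆ ·) c → c.Nonempty →
          ∃ ub ∈ F, ∀ s ∈ c, s ⊆ ub := by
        intro c hcF hchain hcne
        obtain ⟨s, hs⟩ := hcne
        refine ⟨⋃₀ c, ⟨(hcF hs).1.trans (subset_sUnion_of_mem hs), ?_⟩,
          fun t ht => subset_sUnion_of_mem ht⟩
        rintro a ⟨s1, hs1, ha1⟩ b' ⟨s2, hs2, hb2⟩
        rcases hchain.total hs1 hs2 with h12 | h21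
        · exact (hcF hs2).2 a (h12 ha1) b' hb2
        · exact (hcF hs1).2 a ha1 b' (h21 hb2)
      obtain ⟨M, hzM, hMF, hMmax⟩ := zorn_subset_nonempty F hchainub _ hKzF
      -- M is a completion of K
      have hzM' : z ∈ M := hzM (mem_insert z K)
      have hKM : K ⊆ M := (subset_insert z K).trans hzM
      have hMb : Bornology.IsBounded M := by
        have : M ⊆ Metric.closedBall z d := fun a ha => by
          rw [Metric.mem_closedBall, dist_comm]
          exact hMF.2 z hzM' a ha
        exact Bornology.IsBounded.subset (Metric.isBounded_closedBall) this
      have hMd : Metric.diam M = d := by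
        apply le_antisymm
        · exact Metric.diam_le_of_forall_dist_le hd0 hMF.2
        · exact Metric.diam_mono hKM hMb
      have hcomp : IsCompletion M K := by
        refine ⟨⟨hMb, ?_⟩, hKM, hMd⟩
        intro w hw
        by_contra hle
        push_neg at hle
        have hMwF : M ∪ {w} ∈ F := by
          constructor
          · exact hzM.trans (subset_union_left.trans subset_rfl)
          · intro a ha b' hb'
            rcases ha with ha | ha
            · rcases hb' with hb' | hb'
              · exact hMF.2 a ha b' hb'
              · -- b' = w
                rcases hb' with rfl
                by_contra hgt
                push_neg at hgt
                have : Metric.diam M < Metric.diam (M ∪ {b'}) := by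
                  calc Metric.diam M = d := hMd
                    _ < dist a b' := hgt
                    _ ≤ Metric.diam (M ∪ {b'}) :=
                      Metric.dist_le_diam_of_mem
                        (hMb.union (Bornology.isBounded_singleton))
                        (Set.mem_union_left _ ha) (Set.mem_union_right _ rfl)
                exact absurd this (not_lt.mpr hle)
            · rcases ha with rfl
              rcases hb' with hb' | hb'
              · rw [dist_comm]
                by_contra hgt
                push_neg at hgt
                have : Metric.diam M < Metric.diam (M ∪ {a}) := by
                  calc Metric.diam M = d := hMd
                    _ < dist b' a := hgt
                    _ ≤ Metric.diam (M ∪ {a}) :=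
                      Metric.dist_le_diam_of_mem
                        (hMb.union (Bornology.isBounded_singleton))
                        (Set.mem_union_left _ hb') (Set.mem_union_right _ rfl)
                exact absurd this (not_lt.mpr hle)
              · rcases hb' with rfl
                simpa using hd0
        have : M ∪ {w} ⊆ M := hMmax hMwF subset_union_left
        exact hw (this (Set.mem_union_right _ rfl))
      have := huniq M hcomp
      rw [← this]
      exact hzM'
  -- Step 2: key geometric claim
  have key : ∀ (x : E) (r : ℝ), r ≤ d → K ⊆ Metric.closedBall x r →
      Kc ⊆ Metric.closedBall x r := by
    intro x r hrd hxr z hz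
    rw [Metric.mem_closedBall]
    by_contra hgt
    push_neg at hgt
    have hr0 : 0 ≤ r := by
      have := hxr hy0
      rw [Metric.mem_closedBall] at this
      exact dist_nonneg.trans this
    set ρ := dist z x with hρ
    have hρ0 : 0 < ρ := lt_of_le_of_lt hr0 hgt
    set w : E := x - ((d - r) / ρ) • (z - x) with hw
    have hwx : dist w x = d - r := by
      rw [hw, dist_eq_norm]
      simp only [sub_sub_cancel_left, norm_neg, norm_smul]
      rw [Real.norm_eq_abs, abs_div, abs_of_nonneg (by linarith), abs_of_pos hρ0]
      have : ‖z - x‖ = ρ := by rw [hρ, dist_eq_norm]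
      rw [this]
      field_simp
    have hwz : dist w z = ρ + (d - r) := by
      rw [hw, dist_eq_norm]
      have : x - ((d - r) / ρ) • (z - x) - z = -((1 + (d - r) / ρ) • (z - x)) := by
        rw [add_smul, one_smul]
        module
      rw [this, norm_neg, norm_smul, Real.norm_eq_abs]
      have hzx : ‖z - x‖ = ρ := by rw [hρ, dist_eq_norm]
      have hpos : 0 < 1 + (d - r) / ρ := by
        have : 0 ≤ (d - r) / ρ := div_nonneg (by linarith) hρ0.le
        linarith
      rw [hzx, abs_of_pos hpos, add_mul, one_mul, div_mul_cancel₀ _ hρ0.ne']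
    have hwKc : w ∈ Kc := by
      rw [hKcEq]
      intro y hy
      have hxy : dist x y ≤ r := by
        have := hxr hy
        rwa [Metric.mem_closedBall, dist_comm] at this
      calc dist w y ≤ dist w x + dist x y := dist_triangle w x y
        _ ≤ (d - r) + r := add_le_add (le_of_eq hwx) hxy
        _ = d := by ring
    have hzKc : z ∈ Kc := hz
    have : dist w z ≤ d := by
      calc dist w z ≤ Metric.diam Kc := Metric.dist_le_diam_of_mem hcb hwKc hzKc
        _ = d := hdiam
    rw [hwz] at this
    linarith
  -- The sets of admissible radii
  set SK := {r : ℝ | ∃ x : E, K ⊆ Metric.closedBall x r} with hSK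
  set SC := {r : ℝ | ∃ x : E, Kc ⊆ Metric.closedBall x r} with hSC
  have hdSK : d ∈ SK := ⟨y0, fun y hy => by
    rw [Metric.mem_closedBall]; exact Metric.dist_le_diam_of_mem hb hy hy0⟩
  have hdSC : d ∈ SC := ⟨y0, fun z hz => by
    rw [Metric.mem_closedBall]; exact (hKcEq z).1 hz y0 hy0⟩
  have hbddK : BddBelow SK := ⟨0, fun r ⟨x, hx⟩ => by
    have := hx hy0; rw [Metric.mem_closedBall] at this; exact dist_nonneg.trans this⟩
  have hbddC : BddBelow SC := ⟨0, fun r ⟨x, hx⟩ => by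
    have := hx (hsub hy0); rw [Metric.mem_closedBall] at this
    exact dist_nonneg.trans this⟩
  have hSCK : SC ⊆ SK := fun r ⟨x, hx⟩ => ⟨x, fun y hy => hx (hsub hy)⟩
  have hlamKd : chebRadius K ≤ d := csInf_le hbddK hdSK
  have h1 : chebRadius K ≤ chebRadius Kc := csInf_le_csInf hbddK ⟨d, hdSC⟩ hSCK
  have h2 : chebRadius Kc ≤ chebRadius K := by
    apply le_of_forall_pos_le_add
    intro ε hε
    have : sInf SK < chebRadius K + ε := by
      rw [chebRadius, ← hSK]; linarith
    obtain ⟨r, hrSK, hrlt⟩ := exists_lt_of_csInf_lt ⟨d, hdSK⟩ this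
    rcases le_or_gt r d with hrd | hrd
    · obtain ⟨x, hx⟩ := hrSK
      have : r ∈ SC := ⟨x, key x r hrd hx⟩
      calc chebRadius Kc ≤ r := csInf_le hbddC this
        _ ≤ chebRadius K + ε := le_of_lt hrlt
    · have : d ∈ SC := hdSC
      calc chebRadius Kc ≤ d := csInf_le hbddC this
        _ ≤ r := le_of_lt hrd
        _ ≤ chebRadius K + ε := le_of_lt hrlt
  have hrad : chebRadius K = chebRadius Kc := le_antisymm h1 h2
  refine ⟨hrad, ?_⟩
  ext x
  simp only [chebSet, Set.mem_setOf_eq]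
  constructor
  · intro hx
    rw [← hrad]
    exact key x (chebRadius K) hlamKd hx
  · intro hx
    intro y hy
    rw [hrad]
    exact hx (hsub hy)
end

section
/- Let E be a two-dimensional real normed space and K ⊆ E a nonempty compact set that is non-centrable (i.e., diam K < 2·λ_K). Then the Chebyshev set of K is contained in the relative interior of the convex hull of K: Ch(K) ⊆ relint(conv K). -/
open Metric Set

variable {E : Type*} [NormedAddCommGroup E] [NormedSpace ℝ E] [FiniteDimensional ℝ E]

/-!
Let `x` be a Chebyshev center of `K` and `r = chebRadius K`. Non-centrability forces any two
points of the critical set `K ∩ sphere x r` to be at distance `< 2r`. If `x` were not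
interior to `conv K`, a supporting functional `f ≠ 0` at `x` would put the critical set in the
half-plane `f ≤ f x`. In a plane, the critical set seen from `x` then lies in the cone spanned by
its two angularly extreme points `u₁, u₂`, and since `‖u₁ - u₂‖ < 2r`, moving the center a little
in the direction `u₁ + u₂` brings every critical point strictly inside the ball. By compactness
one step works for all of `K` at once, contradicting the minimality of `r`.
-/

open Filter Topology Complex

section

variable {F : Type*} [NormedAddCommGroup F]

theorem exists_chebRadius_le_dist {K : Set F} (hK : IsCompact K) (hne : K.Nonempty) (y : F) :
    ∃ k ∈ K, chebRadius K ≤ dist k y := by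
  obtain ⟨k, hk, hmax⟩ :=
    hK.exists_isMaxOn hne (continuous_id.dist continuous_const).continuousOn
  refine ⟨k, hk, csInf_le ⟨0, ?_⟩ ⟨y, fun k' hk' => mem_closedBall.2 (hmax hk')⟩⟩
  rintro r ⟨z, hz⟩
  exact dist_nonneg.trans (mem_closedBall.1 (hz hk))

variable [NormedSpace ℝ F]

theorem dist_add_smul_lt_of_le {k x v : F} {r s t : ℝ} (hx : dist k x ≤ r)
    (ht : dist k (x + t • v) < r) (hs : 0 < s) (hst : s ≤ t) : dist k (x + s • v) < r := by
  have hr : r ≠ 0 := (dist_nonneg.trans_lt ht).ne'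
  have htpos : 0 < t := hs.trans_le hst
  have hx' : x ∈ closure (ball k r) := by rwa [closure_ball k hr, mem_closedBall']
  have ht' : x + t • v ∈ interior (ball k r) := by rwa [isOpen_ball.interior_eq, mem_ball']
  have h := (convex_ball k r).add_smul_mem_interior' hx' ht'
    ⟨div_pos hs htpos, (div_le_one htpos).2 hst⟩
  rwa [isOpen_ball.interior_eq, mem_ball', smul_smul, div_mul_cancel₀ _ htpos.ne'] at h

theorem exists_forall_dist_add_smul_lt {K : Set F} (hK : IsCompact K) {x v : F} {r : ℝ}
    (hKx : K ⊆ closedBall x r)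
    (hv : ∀ k ∈ K ∩ sphere x r, ∃ t : ℝ, 0 < t ∧ dist k (x + t • v) < r) :
    ∃ t : ℝ, 0 < t ∧ ∀ k ∈ K, dist k (x + t • v) < r := by
  let U : Ioi (0 : ℝ) → Set F := fun s => ⋃ t ∈ Ici (s : ℝ), ball (x + t • v) r
  have hcover : K ⊆ ⋃ s, U s := by
    intro k hk
    obtain ⟨t, ht, hkt⟩ : ∃ t : ℝ, 0 < t ∧ dist k (x + t • v) < r := by
      rcases (mem_closedBall.1 (hKx hk)).eq_or_lt with h | h
      · exact hv k ⟨hk, h⟩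
      · have hcont : Continuous fun t : ℝ => dist k (x + t • v) := by fun_prop
        have hnear : ∀ᶠ t in 𝓝 (0 : ℝ), dist k (x + t • v) < r :=
          hcont.continuousAt.eventually_lt continuousAt_const (by simpa using h)
        exact ((eventually_nhdsWithin_of_eventually_nhds (s := Ioi 0) hnear).and
          self_mem_nhdsWithin).exists.imp fun t ht => ⟨ht.2, ht.1⟩
    exact mem_iUnion.2 ⟨⟨t, ht⟩, mem_iUnion₂.2 ⟨t, le_refl t, hkt⟩⟩
  have hU : Antitone U := fun a b hab => biUnion_subset_biUnion_left (Ici_subset_Ici.2 hab)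
  obtain ⟨⟨s, hs⟩, hKs⟩ := hK.elim_directed_cover U
    (fun _ => isOpen_biUnion fun _ _ => isOpen_ball) hcover hU.directed_le
  refine ⟨s, hs, fun k hk => ?_⟩
  obtain ⟨t, hst, hkt⟩ := mem_iUnion₂.1 (hKs hk)
  exact dist_add_smul_lt_of_le (hKx hk) hkt hs hst

theorem exists_norm_sub_smul_add_lt_of_le {u u₁ u₂ : F} {r c₁ c₂ : ℝ} (h₂ : ‖u₂‖ = r)
    (hu : ‖u‖ = r) (h₁₂ : ‖u₁ - u₂‖ < 2 * r) (hc₁ : 0 ≤ c₁) (hc : c₁ ≤ c₂)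
    (hrep : u = c₁ • u₁ + c₂ • u₂) : ∃ t : ℝ, 0 < t ∧ ‖u - t • (u₁ + u₂)‖ < r := by
  rcases hc₁.eq_or_lt with rfl | hc₁
  · have hr : 0 < r := by linarith [norm_nonneg (u₁ - u₂)]
    have hc₂ : c₂ = 1 := by
      rw [hrep, zero_smul, zero_add, norm_smul, Real.norm_of_nonneg hc, h₂] at hu
      exact (mul_eq_right₀ hr.ne').1 hu
    refine ⟨1 / 2, one_half_pos, ?_⟩
    have hdiff : u - (1 / 2 : ℝ) • (u₁ + u₂) = (1 / 2 : ℝ) • (u₂ - u₁) := by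
      rw [hrep, hc₂]; module
    rw [hdiff, norm_smul, norm_sub_rev, Real.norm_of_nonneg one_half_pos.le]
    linarith
  · refine ⟨c₁, hc₁, ?_⟩
    have hdiff : u - c₁ • (u₁ + u₂) = (c₂ - c₁) • u₂ := by rw [hrep]; module
    -- reverse triangle inequality for `(c₁ + c₂) • u₂ = u - c₁ • (u₁ - u₂)`: `c₂ - c₁ < 1`
    have hlow : (c₁ + c₂) * r ≤ r + c₁ * ‖u₁ - u₂‖ :=
      calc (c₁ + c₂) * r = ‖(c₁ + c₂) • u₂‖ := by
            rw [norm_smul, Real.norm_of_nonneg (by linarith), h₂]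
        _ = ‖u - c₁ • (u₁ - u₂)‖ := by rw [hrep]; congr 1; module
        _ ≤ ‖u‖ + ‖c₁ • (u₁ - u₂)‖ := norm_sub_le _ _
        _ = r + c₁ * ‖u₁ - u₂‖ := by rw [hu, norm_smul, Real.norm_of_nonneg hc₁.le]
    rw [hdiff, norm_smul, Real.norm_of_nonneg (by linarith), h₂]
    nlinarith [mul_lt_mul_of_pos_left h₁₂ hc₁]

theorem exists_norm_sub_smul_add_lt {u u₁ u₂ : F} {r c₁ c₂ : ℝ} (h₁ : ‖u₁‖ = r)
    (h₂ : ‖u₂‖ = r) (hu : ‖u‖ = r) (h₁₂ : ‖u₁ - u₂‖ < 2 * r) (hc₁ : 0 ≤ c₁) (hc₂ : 0 ≤ c₂)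
    (hrep : u = c₁ • u₁ + c₂ • u₂) : ∃ t : ℝ, 0 < t ∧ ‖u - t • (u₁ + u₂)‖ < r := by
  rcases le_total c₁ c₂ with h | h
  · exact exists_norm_sub_smul_add_lt_of_le h₂ hu h₁₂ hc₁ h hrep
  · rw [add_comm u₁]
    exact exists_norm_sub_smul_add_lt_of_le h₁ hu (by rwa [norm_sub_rev]) hc₂ h
      (by rw [hrep, add_comm])

end

theorem exists_ne_zero_forall_le_of_notMem_interior {s : Set E} (hs : Convex ℝ s)
    (hsne : s.Nonempty) {x : E} (hx : x ∉ interior s) :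
    ∃ f : StrongDual ℝ E, f ≠ 0 ∧ ∀ y ∈ s, f y ≤ f x := by
  by_cases hint : (interior s).Nonempty
  · exact geometric_hahn_banach_of_nonempty_interior_point hs hx hint
  obtain ⟨y₀, hy₀⟩ := hsne
  have hV : vectorSpan ℝ s < ⊤ := by
    rwa [lt_top_iff_ne_top, Ne,
      ← AffineSubspace.affineSpan_eq_top_iff_vectorSpan_eq_top_of_nonempty ℝ E E ⟨y₀, hy₀⟩,
      ← hs.interior_nonempty_iff_affineSpan_eq_top]
  obtain ⟨g, hg, hVg⟩ := (vectorSpan ℝ s).exists_le_ker_of_lt_top hV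
  have hconst : ∀ y ∈ s, g y = g y₀ := fun y hy => by
    simpa [sub_eq_zero] using hVg (vsub_mem_vectorSpan ℝ hy hy₀)
  have hg' : LinearMap.toContinuousLinearMap g ≠ 0 := by simpa using hg
  rcases le_total (g y₀) (g x) with h | h
  · exact ⟨_, hg', fun y hy => by simpa [hconst y hy] using h⟩
  · exact ⟨-_, neg_ne_zero.2 hg', fun y hy => by simpa [hconst y hy] using h⟩

theorem Complex.sin_sub_mul_exp_mul_I (a b t : ℝ) :
    (Real.sin (b - a) : ℂ) * exp (t * I) =
      (Real.sin (b - t) : ℂ) * exp (a * I) + (Real.sin (t - a) : ℂ) * exp (b * I) := by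
  simp only [Real.sin_sub, exp_mul_I]
  push_cast
  ring

theorem Complex.exists_eq_smul_add_smul_of_arg_le {z₁ z₂ z : ℂ} (h₁ : z₁ ≠ 0) (h₂ : z₂ ≠ 0)
    (h₁z : arg z₁ ≤ arg z) (hz₂ : arg z ≤ arg z₂) (h₁₂ : arg z₂ < arg z₁ + Real.pi) :
    ∃ c₁ c₂ : ℝ, 0 ≤ c₁ ∧ 0 ≤ c₂ ∧ z = c₁ • z₁ + c₂ • z₂ := by
  have hn₁ : (‖z₁‖ : ℂ) ≠ 0 := by simpa using h₁
  have hn₂ : (‖z₂‖ : ℂ) ≠ 0 := by simpa using h₂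
  rw [← norm_mul_exp_arg_mul_I z, ← norm_mul_exp_arg_mul_I z₁, ← norm_mul_exp_arg_mul_I z₂]
  rcases (h₁z.trans hz₂).eq_or_lt with h | h
  · have ht : arg z = arg z₁ := le_antisymm (h ▸ hz₂) h₁z
    refine ⟨‖z‖ / ‖z₁‖, 0, by positivity, le_rfl, ?_⟩
    rw [ht, Complex.real_smul, Complex.real_smul]
    push_cast
    field_simp
    ring
  · have hd : 0 < Real.sin (arg z₂ - arg z₁) :=
      Real.sin_pos_of_pos_of_lt_pi (by linarith) (by linarith)
    refine ⟨‖z‖ * Real.sin (arg z₂ - arg z) / (‖z₁‖ * Real.sin (arg z₂ - arg z₁)),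
      ‖z‖ * Real.sin (arg z - arg z₁) / (‖z₂‖ * Real.sin (arg z₂ - arg z₁)),
      div_nonneg (mul_nonneg (norm_nonneg _)
        (Real.sin_nonneg_of_nonneg_of_le_pi (by linarith) (by linarith))) (by positivity),
      div_nonneg (mul_nonneg (norm_nonneg _)
        (Real.sin_nonneg_of_nonneg_of_le_pi (by linarith) (by linarith))) (by positivity), ?_⟩
    have hd' : (Real.sin (arg z₂ - arg z₁) : ℂ) ≠ 0 := by exact_mod_cast hd.ne'
    have hsin := sin_sub_mul_exp_mul_I (arg z₁) (arg z₂) (arg z)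
    rw [Complex.real_smul, Complex.real_smul]
    push_cast at hsin hd' ⊢
    field_simp
    linear_combination (norm := ring_nf) (‖z‖ : ℂ) * hsin

theorem finrank_ker_eq_one_of_finrank_eq_two (hdim : Module.finrank ℝ E = 2)
    {f : StrongDual ℝ E} (hf : f ≠ 0) :
    Module.finrank ℝ (LinearMap.ker (f : E →ₗ[ℝ] ℝ)) = 1 := by
  have := Module.Dual.finrank_ker_add_one_of_ne_zero (f := (f : E →ₗ[ℝ] ℝ))
    fun h => hf (ContinuousLinearMap.coe_injective h)
  omega

theorem exists_smul_eq_of_apply_eq_zero (hdim : Module.finrank ℝ E = 2) {f : StrongDual ℝ E}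
    (hf : f ≠ 0) {w z : E} (hw : w ≠ 0) (hfw : f w = 0) (hfz : f z = 0) :
    ∃ c : ℝ, c • w = z := by
  obtain ⟨c, hc⟩ := (finrank_eq_one_iff_of_nonzero' (⟨w, hfw⟩ : LinearMap.ker (f : E →ₗ[ℝ] ℝ))
    fun h => hw (congrArg Subtype.val h)).1 (finrank_ker_eq_one_of_finrank_eq_two hdim hf)
    ⟨z, hfz⟩
  exact ⟨c, congrArg Subtype.val hc⟩

theorem exists_forall_eq_smul_add_smul_of_finrank_eq_two (hdim : Module.finrank ℝ E = 2) {C : Set E}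
    (hC : IsCompact C) (hCne : C.Nonempty) {f : StrongDual ℝ E} (hf : f ≠ 0)
    (hfC : ∀ u ∈ C, f u ≤ 0) (hray : ∀ u ∈ C, ∀ c : ℝ, c • u ∈ C → 0 < c) :
    ∃ u₁ ∈ C, ∃ u₂ ∈ C, ∀ u ∈ C, ∃ c₁ c₂ : ℝ, 0 ≤ c₁ ∧ 0 ≤ c₂ ∧ u = c₁ • u₁ + c₂ • u₂ := by
  obtain ⟨w, hw, hfw, hCw⟩ : ∃ w : E, w ≠ 0 ∧ f w = 0 ∧
      ∀ u ∈ C, f u = 0 → ∃ c : ℝ, 0 < c ∧ c • w = u := by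
    by_cases h : ∃ u₀ ∈ C, f u₀ = 0
    · obtain ⟨u₀, hu₀, hfu₀⟩ := h
      have hu₀0 : u₀ ≠ 0 := by
        rintro rfl
        exact (hray 0 hu₀ 0 (by rwa [smul_zero])).false
      refine ⟨u₀, hu₀0, hfu₀, fun u hu hfu => ?_⟩
      obtain ⟨c, rfl⟩ := exists_smul_eq_of_apply_eq_zero hdim hf hu₀0 hfu₀ hfu
      exact ⟨c, hray u₀ hu₀ c hu, rfl⟩
    · obtain ⟨⟨w, hfw⟩, hw⟩ := Module.finrank_pos_iff_exists_ne_zero.1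
        ((finrank_ker_eq_one_of_finrank_eq_two hdim hf).symm ▸ one_pos)
      exact ⟨w, fun h => hw (Subtype.ext h), hfw, fun u hu hfu => (h ⟨u, hu, hfu⟩).elim⟩
  obtain ⟨p, -, hpw⟩ := exists_dual_vector ℝ w (norm_ne_zero_iff.2 hw)
  -- complex coordinates putting `C` in the closed upper half-plane, off the negative reals,
  -- so that `arg` is continuous on `C`
  let m : E →L[ℝ] ℂ := equivRealProdCLM.symm.toContinuousLinearMap ∘L p.prod (-f)
  have hm_re (z : E) : (m z).re = p z := rfl
  have hm_im (z : E) : (m z).im = -f z := rfl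
  have hm : Function.Injective m := by
    refine (injective_iff_map_eq_zero m).2 fun z hz => ?_
    have hfz : f z = 0 := by simpa [hm_im] using congrArg im hz
    obtain ⟨c, rfl⟩ := exists_smul_eq_of_apply_eq_zero hdim hf hw hfw hfz
    have hpz : c * ‖w‖ = 0 := by simpa [hm_re, hpw] using congrArg re hz
    rw [(mul_eq_zero_iff_right (norm_ne_zero_iff.2 hw)).1 hpz, zero_smul]
  have hslit : ∀ u ∈ C, m u ∈ slitPlane := by
    intro u hu
    rw [mem_slitPlane_iff, hm_re, hm_im]
    rcases (hfC u hu).lt_or_eq with h | h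
    · exact Or.inr (by linarith)
    · obtain ⟨c, hc, rfl⟩ := hCw u hu h
      exact Or.inl (by rw [map_smul, hpw]; exact mul_pos hc (norm_pos_iff.2 hw))
  have hcont : ContinuousOn (fun u => arg (m u)) C := fun u hu =>
    ((continuousAt_arg (hslit u hu)).comp m.continuous.continuousAt).continuousWithinAt
  obtain ⟨u₁, hu₁, hmin⟩ := hC.exists_isMinOn hCne hcont
  obtain ⟨u₂, hu₂, hmax⟩ := hC.exists_isMaxOn hCne hcont
  refine ⟨u₁, hu₁, u₂, hu₂, fun u hu => ?_⟩
  have harg₁ : 0 ≤ arg (m u₁) := arg_nonneg_iff.2 (by rw [hm_im]; linarith [hfC u₁ hu₁])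
  have harg₂ : arg (m u₂) < Real.pi :=
    (arg_le_pi _).lt_of_ne (mem_slitPlane_iff_arg.1 (hslit u₂ hu₂)).1
  obtain ⟨c₁, c₂, hc₁, hc₂, hc⟩ := exists_eq_smul_add_smul_of_arg_le
    (slitPlane_ne_zero (hslit u₁ hu₁)) (slitPlane_ne_zero (hslit u₂ hu₂)) (hmin hu) (hmax hu)
    (by linarith)
  exact ⟨c₁, c₂, hc₁, hc₂, hm (by rw [hc, map_add, map_smul, map_smul])⟩

theorem exists_forall_norm_sub_smul_lt (hdim : Module.finrank ℝ E = 2) {C : Set E}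
    (hC : IsCompact C) {r : ℝ} (hCr : C ⊆ sphere 0 r)
    (hCd : ∀ u ∈ C, ∀ u' ∈ C, ‖u - u'‖ < 2 * r) {f : StrongDual ℝ E} (hf : f ≠ 0)
    (hfC : ∀ u ∈ C, f u ≤ 0) : ∃ v : E, ∀ u ∈ C, ∃ t : ℝ, 0 < t ∧ ‖u - t • v‖ < r := by
  rcases C.eq_empty_or_nonempty with rfl | hCne
  · exact ⟨0, fun u hu => hu.elim⟩
  have hnorm (u) (hu : u ∈ C) : ‖u‖ = r := mem_sphere_zero_iff_norm.1 (hCr hu)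
  have hray (u) (hu : u ∈ C) (c : ℝ) (hcu : c • u ∈ C) : 0 < c := by
    have hr : 0 < r := by simpa using hCd u hu u hu
    have hc : |c| = 1 := by
      have := hnorm _ hcu
      rw [norm_smul, Real.norm_eq_abs, hnorm u hu] at this
      exact (mul_eq_right₀ hr.ne').1 this
    rcases abs_eq zero_le_one |>.1 hc with rfl | rfl
    · exact one_pos
    · have := hCd u hu _ hcu
      rw [neg_one_smul, sub_neg_eq_add, ← two_smul ℝ, norm_smul, hnorm u hu] at this
      norm_num at this
  obtain ⟨u₁, hu₁, u₂, hu₂, hcone⟩ :=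
    exists_forall_eq_smul_add_smul_of_finrank_eq_two hdim hC hCne hf hfC hray
  refine ⟨u₁ + u₂, fun u hu => ?_⟩
  obtain ⟨c₁, c₂, hc₁, hc₂, hrep⟩ := hcone u hu
  exact exists_norm_sub_smul_add_lt (hnorm u₁ hu₁) (hnorm u₂ hu₂) (hnorm u hu)
    (hCd u₁ hu₁ u₂ hu₂) hc₁ hc₂ hrep

theorem chebSet_subset_relint_convexHull_of_noncentrable
    (hdim : Module.finrank ℝ E = 2)
    (K : Set E) (hK : K.Nonempty) (hc : IsCompact K)
    (hnc : Metric.diam K < 2 * chebRadius K) :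
    chebSet K ⊆ intrinsicInterior ℝ (convexHull ℝ K) := by
  intro x hx
  refine interior_subset_intrinsicInterior ?_
  by_contra hxint
  obtain ⟨f, hf, hfx⟩ := exists_ne_zero_forall_le_of_notMem_interior (convex_convexHull ℝ K)
    hK.convexHull hxint
  obtain ⟨v, hv⟩ := exists_forall_norm_sub_smul_lt hdim (C := (· - x) '' critSet K x)
    ((hc.inter_right isClosed_sphere).image (continuous_sub_right x))
    (by rintro _ ⟨k, ⟨-, hk⟩, rfl⟩; rwa [mem_sphere_zero_iff_norm, ← dist_eq_norm])
    (by
      rintro _ ⟨k, ⟨hk, -⟩, rfl⟩ _ ⟨k', ⟨hk', -⟩, rfl⟩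
      rw [sub_sub_sub_cancel_right, ← dist_eq_norm]
      exact (dist_le_diam_of_mem hc.isBounded hk hk').trans_lt hnc)
    hf
    (by
      rintro _ ⟨k, ⟨hk, -⟩, rfl⟩
      rw [map_sub, sub_nonpos]
      exact hfx k (subset_convexHull ℝ K hk))
  obtain ⟨t, -, ht⟩ := exists_forall_dist_add_smul_lt hc hx fun k hk => by
    obtain ⟨t, ht, hkt⟩ := hv (k - x) ⟨k, hk, rfl⟩
    exact ⟨t, ht, by rwa [dist_eq_norm, ← sub_sub]⟩
  obtain ⟨k, hk, hle⟩ := exists_chebRadius_le_dist hc hK (x + t • v)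
  exact (ht k hk).not_ge hle
end

section
/- Let E be a finite-dimensional real normed space and p₁, p₂ ∈ E distinct points. Then the Chebyshev set of {p₁, p₂} is a singleton if and only if p₁ is an extreme point of the ball B((p₁ + p₂)/2, ‖p₁ − p₂‖/2). -/
open Metric Set

variable {E : Type*} [NormedAddCommGroup E] [NormedSpace ℝ E] [FiniteDimensional ℝ E]

lemma aux_mid (p₁ p₂ : E) : midpoint ℝ p₁ p₂ = (2:ℝ)⁻¹ • (p₁ + p₂) := by
  rw [midpoint_eq_smul_add, invOf_eq_inv]

lemma aux_sub_mid (p₁ p₂ : E) : p₁ - midpoint ℝ p₁ p₂ = (2:ℝ)⁻¹ • (p₁ - p₂) := by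
  rw [aux_mid]; module

lemma aux_norm_sub_mid (p₁ p₂ : E) : ‖p₁ - midpoint ℝ p₁ p₂‖ = ‖p₁ - p₂‖ / 2 := by
  rw [aux_sub_mid, norm_smul]
  simp [Real.norm_eq_abs, abs_of_nonneg]
  ring

lemma aux_two_smul_mid (p₁ p₂ : E) : (2:ℝ) • midpoint ℝ p₁ p₂ = p₁ + p₂ := by
  rw [aux_mid]; module

lemma chebRadius_pair (p₁ p₂ : E) : chebRadius ({p₁, p₂} : Set E) = ‖p₁ - p₂‖ / 2 := by
  have hlb : ∀ r ∈ {r : ℝ | ∃ x : E, ({p₁, p₂} : Set E) ⊆ Metric.closedBall x r},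
      ‖p₁ - p₂‖ / 2 ≤ r := by
    rintro r ⟨x, hx⟩
    have h1 : dist p₁ x ≤ r := hx (mem_insert _ _)
    have h2 : dist p₂ x ≤ r := hx (mem_insert_of_mem _ rfl)
    have := dist_triangle p₁ x p₂
    rw [dist_eq_norm p₁ p₂] at this
    rw [dist_comm p₂ x] at h2
    linarith
  have hmem : ‖p₁ - p₂‖ / 2 ∈ {r : ℝ | ∃ x : E, ({p₁, p₂} : Set E) ⊆ Metric.closedBall x r} := by
    refine ⟨midpoint ℝ p₁ p₂, ?_⟩
    intro y hy
    rcases hy with rfl | hy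
    · rw [mem_closedBall, dist_eq_norm, aux_norm_sub_mid]
    · rcases hy with rfl
      rw [mem_closedBall, dist_eq_norm, midpoint_comm, aux_norm_sub_mid, norm_sub_rev]
  exact le_antisymm (csInf_le ⟨_, hlb⟩ hmem) (le_csInf ⟨_, hmem⟩ hlb)

lemma mem_chebSet_pair {p₁ p₂ x : E} :
    x ∈ chebSet ({p₁, p₂} : Set E) ↔
      ‖x - p₁‖ ≤ ‖p₁ - p₂‖ / 2 ∧ ‖x - p₂‖ ≤ ‖p₁ - p₂‖ / 2 := by
  simp [chebSet, chebRadius_pair, Set.insert_subset_iff, dist_eq_norm,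
    norm_sub_rev x p₁, norm_sub_rev x p₂]

lemma mid_mem_chebSet_pair (p₁ p₂ : E) :
    midpoint ℝ p₁ p₂ ∈ chebSet ({p₁, p₂} : Set E) := by
  rw [mem_chebSet_pair]
  constructor
  · rw [norm_sub_rev, aux_norm_sub_mid]
  · rw [norm_sub_rev, midpoint_comm, aux_norm_sub_mid, norm_sub_rev]

theorem chebSet_pair_singleton_iff_extreme (p₁ p₂ : E) (h : p₁ ≠ p₂) :
    (∃ z : E, chebSet {p₁, p₂} = {z}) ↔
      p₁ ∈ Set.extremePoints ℝ
        (Metric.closedBall (midpoint ℝ p₁ p₂) (‖p₁ - p₂‖ / 2)) := by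
  set m := midpoint ℝ p₁ p₂ with hm
  set r := ‖p₁ - p₂‖ / 2 with hr
  have hp₁m : ‖p₁ - m‖ = r := aux_norm_sub_mid p₁ p₂
  have h2m : (2:ℝ) • m = p₁ + p₂ := aux_two_smul_mid p₁ p₂
  constructor
  · rintro ⟨z, hz⟩
    have hmz : m = z := by
      have := mid_mem_chebSet_pair p₁ p₂
      rw [hz] at this; exact this
    rw [mem_extremePoints]
    refine ⟨by rw [mem_closedBall, dist_eq_norm, hp₁m], ?_⟩
    intro x₁ hx₁ x₂ hx₂ hseg
    rw [mem_closedBall, dist_eq_norm] at hx₁ hx₂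
    obtain ⟨a, b, ha, hb, hab, hp⟩ := hseg
    set ε := min a b with hε
    have hε0 : 0 < ε := lt_min ha hb
    have hεa : ε ≤ a := min_le_left _ _
    have hεb : ε ≤ b := min_le_right _ _
    set y := m + ε • (x₁ - x₂) with hy
    have key : ∀ s t : ℝ, 0 ≤ s → 0 ≤ t → s + t = 1 →
        ‖s • (x₁ - m) + t • (x₂ - m)‖ ≤ r := by
      intro s t hs ht hst
      calc ‖s • (x₁ - m) + t • (x₂ - m)‖
          ≤ ‖s • (x₁ - m)‖ + ‖t • (x₂ - m)‖ := norm_add_le _ _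
        _ = s * ‖x₁ - m‖ + t * ‖x₂ - m‖ := by
            rw [norm_smul, norm_smul, Real.norm_of_nonneg hs, Real.norm_of_nonneg ht]
        _ ≤ s * r + t * r := by
            gcongr
        _ = r := by rw [← add_mul, hst, one_mul]
    have hyc : y ∈ chebSet ({p₁, p₂} : Set E) := by
      rw [mem_chebSet_pair]
      have hb' : b = 1 - a := by linarith
      constructor
      · have e1 : y - p₁ = -((a - ε) • (x₁ - m) + (b + ε) • (x₂ - m)) := by
          rw [hy, ← hp, hb']; module
        rw [e1, norm_neg]
        exact key _ _ (by linarith) (by linarith) (by linarith)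
      · have e2 : y - p₂ = (a + ε) • (x₁ - m) + (b - ε) • (x₂ - m) := by
          have : p₂ = (2:ℝ) • m - p₁ := by rw [h2m]; abel
          rw [hy, this, ← hp, hb']; module
        rw [e2]
        exact key _ _ (by linarith) (by linarith) (by linarith)
    have hym : y = m := by
      rw [hz] at hyc
      rw [hyc, ← hmz]
    have hx12 : x₁ = x₂ := by
      have : ε • (x₁ - x₂) = 0 := by
        have := hym
        rw [hy] at this
        simpa using this
      rcases smul_eq_zero.mp this with h' | h'
      · exact absurd h' (ne_of_gt hε0)
      · exact sub_eq_zero.mp h'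
    have hx₁p : x₁ = p₁ := by
      rw [← hp, hx12, ← add_smul, hab, one_smul]
    exact ⟨hx₁p, hx12 ▸ hx₁p⟩
  · intro hext
    refine ⟨m, ?_⟩
    ext x
    simp only [Set.mem_singleton_iff]
    constructor
    · intro hx
      rw [mem_chebSet_pair] at hx
      obtain ⟨h1, h2⟩ := hx
      set x₁ := p₁ - (x - m) with hx₁
      set x₂ := p₁ + (x - m) with hx₂
      have hx₁b : x₁ ∈ Metric.closedBall m r := by
        rw [mem_closedBall, dist_eq_norm]
        have : x₁ - m = -(x - p₁) := by rw [hx₁]; abel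
        rw [this, norm_neg]; exact h1
      have hx₂b : x₂ ∈ Metric.closedBall m r := by
        rw [mem_closedBall, dist_eq_norm]
        have : x₂ - m = x - p₂ := by
          have hp2 : p₂ = (2:ℝ) • m - p₁ := by rw [h2m]; abel
          rw [hx₂, hp2]; module
        rw [this]; exact h2
      have hseg : p₁ ∈ openSegment ℝ x₁ x₂ :=
        ⟨1/2, 1/2, by norm_num, by norm_num, by norm_num,
          by rw [hx₁, hx₂]; module⟩
      rw [mem_extremePoints] at hext
      have := (hext.2 x₁ hx₁b x₂ hx₂b hseg).1
      have : x - m = 0 := by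
        have h' := this
        rw [hx₁] at h'
        simpa [sub_eq_self] using h'
      rw [sub_eq_zero] at this
      exact this
    · rintro rfl
      exact mid_mem_chebSet_pair p₁ p₂
end
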